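/- Contraction and cocontraction: for every formula A of DT, every connective α ∈ {∨}∪𝒜 and every connective β ∈ {∧}∪𝒜, there exist cut-free and identity-free derivations in DTsa from (A α A) to A and from A to (A β A). Moreover there is a constant c independent of A such that these derivations can be chosen with width at most c·n and height at most c·n (hence size at most c·n²), where n is the size of A. -/

import Mathlib

namespace SubatomicDT

/-- Formulae of the subatomic language DT: units, disjunction, conjunction,
and atoms (drawn from the countable set ℕ) used as binary connectives. -/
inductive Fm where
  | zero : Fm
  | one : Fm
  | or : Fm → Fm → Fm
  | and : Fm → Fm → Fm
  | atom : ℕ → Fm → Fm → Fm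
deriving DecidableEq

/-- Connectives: ∨, ∧ and the atoms. -/
inductive Conn where
  | or : Conn
  | and : Conn
  | atom : ℕ → Conn
deriving DecidableEq

/-- Apply a connective to two formulae. -/
def Conn.app : Conn → Fm → Fm → Fm
  | .or, A, B => .or A B
  | .and, A, B => .and A B
  | .atom a, A, B => .atom a A B

/-- The "strong" version α̂ of a connective: ∨̂ = ∧̂ = ∧ and â = a. -/
def Conn.up : Conn → Conn
  | .or => .and
  | .and => .and
  | .atom a => .atom a

/-- The "weak" version α̌ of a connective: ∨̌ = ∧̌ = ∨ and ǎ = a. -/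
def Conn.down : Conn → Conn
  | .or => .or
  | .and => .or
  | .atom a => .atom a

/-- A connective is an atom. -/
def Conn.IsAtom : Conn → Prop
  | .atom _ => True
  | _ => False

/-- The equational theory `=` on formulae: the smallest equivalence, closed
under contexts, generated by A∨0 = A, A∧1 = A, 0∧0 = 0, 1∨1 = 1,
0 a 0 = 0 and 1 a 1 = 1 for every atom a. -/
inductive FEq : Fm → Fm → Prop
  | orZero (A) : FEq (.or A .zero) A
  | andOne (A) : FEq (.and A .one) A
  | zeroAndZero : FEq (.and .zero .zero) .zero
  | oneOrOne : FEq (.or .one .one) .one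
  | atomZero (a) : FEq (.atom a .zero .zero) .zero
  | atomOne (a) : FEq (.atom a .one .one) .one
  | refl (A) : FEq A A
  | symm {A B} : FEq A B → FEq B A
  | trans {A B C} : FEq A B → FEq B C → FEq A C
  | orCongr {A B C D} : FEq A B → FEq C D → FEq (.or A C) (.or B D)
  | andCongr {A B C D} : FEq A B → FEq C D → FEq (.and A C) (.and B D)
  | atomCongr (a : ℕ) {A B C D} : FEq A B → FEq C D → FEq (.atom a A C) (.atom a B D)

/-- The rules of system DTsa: all instances of the two subatomic rule shapes
(A β B) α (C β̂ D) ⟶ (A α C) β (B α D) and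
(A β B) α (C β D) ⟶ (A α C) β (B α̌ D), plus the equality rules. -/
inductive DTRule : Fm → Fm → Prop
  | up (α β : Conn) (A B C D : Fm) :
      DTRule (α.app (β.app A B) (β.up.app C D)) (β.app (α.app A C) (α.app B D))
  | down (α β : Conn) (A B C D : Fm) :
      DTRule (α.app (β.app A B) (β.app C D)) (β.app (α.app A C) (α.down.app B D))
  | eq {A B : Fm} : FEq A B → DTRule A B

/-- The rules of system SKSsa: DTsa without the rules whose instances have an
atom in both the α and the β position of the subatomic shape. -/
inductive SKSRule : Fm → Fm → Prop
  | up (α β : Conn) (A B C D : Fm) (h : ¬(α.IsAtom ∧ β.IsAtom)) :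
      SKSRule (α.app (β.app A B) (β.up.app C D)) (β.app (α.app A C) (α.app B D))
  | down (α β : Conn) (A B C D : Fm) (h : ¬(α.IsAtom ∧ β.IsAtom)) :
      SKSRule (α.app (β.app A B) (β.app C D)) (β.app (α.app A C) (α.down.app B D))
  | eq {A B : Fm} : FEq A B → SKSRule A B

/-- Open-deduction derivations over a set of rules `R`: a formula is a
derivation, derivations compose vertically through a rule instance, and
derivations compose horizontally by any connective. -/
inductive Deriv (R : Fm → Fm → Prop) : Fm → Fm → Type
  | form (A : Fm) : Deriv R A A
  | vcomp {A B C D : Fm} (φ : Deriv R A B) (r : R B C) (ψ : Deriv R C D) : Deriv R A D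
  | hcomp {A B C D : Fm} (α : Conn) (φ : Deriv R A B) (ψ : Deriv R C D) :
      Deriv R (α.app A C) (α.app B D)

/-- Size of a formula: the number of occurrences of units in it. -/
def Fm.size : Fm → ℕ
  | .zero => 1
  | .one => 1
  | .or A B => A.size + B.size
  | .and A B => A.size + B.size
  | .atom _ A B => A.size + B.size

/-- Negation of a formula. -/
def Fm.neg : Fm → Fm
  | .zero => .one
  | .one => .zero
  | .or A B => .and A.neg B.neg
  | .and A B => .or A.neg B.neg
  | .atom a A B => .atom a A.neg B.neg

/-- The inference step with premiss `P` and conclusion `Q` is a cut on atom `a`: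
an instance (A a B) ∧ (C a D) ⟶ (A ∧ C) a (B ∧ D) with A = D = 0 and B = C = 1,
or A = D = 1 and B = C = 0, in the equational theory. -/
def IsCut (a : ℕ) (P Q : Fm) : Prop :=
  ∃ A B C D : Fm,
    P = .and (.atom a A B) (.atom a C D) ∧
    Q = .atom a (.and A C) (.and B D) ∧
    ((FEq A .zero ∧ FEq D .zero ∧ FEq B .one ∧ FEq C .one) ∨
     (FEq A .one ∧ FEq D .one ∧ FEq B .zero ∧ FEq C .zero))

/-- An identity on `a` is the dual of a cut on `a`. -/
def IsIdentity (a : ℕ) (P Q : Fm) : Prop := IsCut a Q.neg P.neg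

/-- A derivation is cut-free: it contains no cut on any atom. -/
def Deriv.cutFree {R : Fm → Fm → Prop} : {A B : Fm} → Deriv R A B → Prop
  | _, _, .form _ => True
  | _, _, @Deriv.vcomp _ _ P Q _ φ _ ψ => φ.cutFree ∧ ψ.cutFree ∧ ∀ a, ¬ IsCut a P Q
  | _, _, .hcomp _ φ ψ => φ.cutFree ∧ ψ.cutFree

/-- A derivation is identity-free: it contains no identity on any atom. -/
def Deriv.idFree {R : Fm → Fm → Prop} : {A B : Fm} → Deriv R A B → Prop
  | _, _, .form _ => True
  | _, _, @Deriv.vcomp _ _ P Q _ φ _ ψ => φ.idFree ∧ ψ.idFree ∧ ∀ a, ¬ IsIdentity a P Q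
  | _, _, .hcomp _ φ ψ => φ.idFree ∧ ψ.idFree

/-- A derivation contains no cut on the given atom `a`. -/
def Deriv.cutFreeOn {R : Fm → Fm → Prop} (a : ℕ) : {A B : Fm} → Deriv R A B → Prop
  | _, _, .form _ => True
  | _, _, @Deriv.vcomp _ _ P Q _ φ _ ψ => φ.cutFreeOn a ∧ ψ.cutFreeOn a ∧ ¬ IsCut a P Q
  | _, _, .hcomp _ φ ψ => φ.cutFreeOn a ∧ ψ.cutFreeOn a

/-- Width of a derivation. -/
def Deriv.width {R : Fm → Fm → Prop} : {A B : Fm} → Deriv R A B → ℕ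
  | _, _, .form A => A.size
  | _, _, .vcomp φ _ ψ => max φ.width ψ.width
  | _, _, .hcomp _ φ ψ => φ.width + ψ.width

/-- Height of a derivation. -/
def Deriv.height {R : Fm → Fm → Prop} : {A B : Fm} → Deriv R A B → ℕ
  | _, _, .form _ => 0
  | _, _, .vcomp φ _ ψ => φ.height + ψ.height + 1
  | _, _, .hcomp _ φ ψ => max φ.height ψ.height

/-- Size of a derivation: the number of occurrences of units in it. -/
def Deriv.size {R : Fm → Fm → Prop} : {A B : Fm} → Deriv R A B → ℕ
  | _, _, .form A => A.size
  | _, _, .vcomp φ _ ψ => φ.size + ψ.size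
  | _, _, .hcomp _ φ ψ => φ.size + ψ.size

/-- Semantic interpretation of formulae for an assignment `X : 𝒜 → {0,1}`. -/
def eval (X : ℕ → Bool) : Fm → Bool
  | .zero => false
  | .one => true
  | .or A B => eval X A || eval X B
  | .and A B => eval X A && eval X B
  | .atom a A B => if X a then eval X B else eval X A

/-- The atom `a` occurs in the formula. -/
def Fm.hasAtom (a : ℕ) : Fm → Prop
  | .zero => False
  | .one => False
  | .or A B => A.hasAtom a ∨ B.hasAtom a
  | .and A B => A.hasAtom a ∨ B.hasAtom a
  | .atom b A B => b = a ∨ A.hasAtom a ∨ B.hasAtom a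

/-- Some atom occurs in the formula. -/
def Fm.hasAnyAtom : Fm → Prop
  | .zero => False
  | .one => False
  | .or A B => A.hasAnyAtom ∨ B.hasAnyAtom
  | .and A B => A.hasAnyAtom ∨ B.hasAnyAtom
  | .atom _ _ _ => True

/-- The formula has a nested atom occurrence: an atom occurrence inside
an argument of an atom used as a connective. -/
def Fm.hasNested : Fm → Prop
  | .zero => False
  | .one => False
  | .or A B => A.hasNested ∨ B.hasNested
  | .and A B => A.hasNested ∨ B.hasNested
  | .atom _ A B => A.hasAnyAtom ∨ B.hasAnyAtom

/-- The formula has a nested occurrence of the particular atom `a`. -/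
def Fm.nestedOn (a : ℕ) : Fm → Prop
  | .zero => False
  | .one => False
  | .or A B => A.nestedOn a ∨ B.nestedOn a
  | .and A B => A.nestedOn a ∨ B.nestedOn a
  | .atom _ A B => A.hasAtom a ∨ B.hasAtom a

/-- A is a propositional formula: equal (in the equational theory) to a formula
with no nested atom occurrences. -/
def IsPropF (A : Fm) : Prop := ∃ B, FEq A B ∧ ¬ B.hasNested

/-- The formula contains no conjunction and no disjunction. -/
def Fm.noAndOr : Fm → Prop
  | .zero => True
  | .one => True
  | .or _ _ => False
  | .and _ _ => False
  | .atom _ A B => A.noAndOr ∧ B.noAndOr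

/-- A is a strict decision tree: equal (in the equational theory) to a formula
with no conjunctions or disjunctions. -/
def IsSDT (A : Fm) : Prop := ∃ B, FEq A B ∧ B.noAndOr

/-- Right projection on atom `a` of a formula. -/
def rproj (a : ℕ) : Fm → Fm
  | .zero => .zero
  | .one => .one
  | .or A B => .or (rproj a A) (rproj a B)
  | .and A B => .and (rproj a A) (rproj a B)
  | .atom b A B => if b = a then rproj a B else .atom b (rproj a A) (rproj a B)

/-- Left projection on atom `a` of a formula. -/
def lproj (a : ℕ) : Fm → Fm
  | .zero => .zero
  | .one => .one
  | .or A B => .or (lproj a A) (lproj a B)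
  | .and A B => .and (lproj a A) (lproj a B)
  | .atom b A B => if b = a then lproj a A else .atom b (lproj a A) (lproj a B)

/-- The atom `a` does not occur anywhere in the derivation. -/
def Deriv.noAtom {R : Fm → Fm → Prop} (a : ℕ) : {A B : Fm} → Deriv R A B → Prop
  | _, _, .form A => ¬ A.hasAtom a
  | _, _, .vcomp φ _ ψ => φ.noAtom a ∧ ψ.noAtom a
  | _, _, .hcomp _ φ ψ => φ.noAtom a ∧ ψ.noAtom a

/-- Single-hole contexts. -/
inductive Ctx where
  | hole : Ctx
  | orL : Ctx → Fm → Ctx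
  | orR : Fm → Ctx → Ctx
  | andL : Ctx → Fm → Ctx
  | andR : Fm → Ctx → Ctx
  | atomL : ℕ → Ctx → Fm → Ctx
  | atomR : ℕ → Fm → Ctx → Ctx

/-- Substitute a formula into the hole of a context. -/
def Ctx.fill : Ctx → Fm → Fm
  | .hole, A => A
  | .orL K B, A => .or (K.fill A) B
  | .orR B K, A => .or B (K.fill A)
  | .andL K B, A => .and (K.fill A) B
  | .andR B K, A => .and B (K.fill A)
  | .atomL a K B, A => .atom a (K.fill A) B
  | .atomR a B K, A => .atom a B (K.fill A)

/-- Size of a context: the number of unit occurrences in it. -/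
def Ctx.size : Ctx → ℕ
  | .hole => 0
  | .orL K B => K.size + B.size
  | .orR B K => B.size + K.size
  | .andL K B => K.size + B.size
  | .andR B K => B.size + K.size
  | .atomL _ K B => K.size + B.size
  | .atomR _ B K => B.size + K.size

/-! Contraction of `A = B γ C` is one instance of the down rule,
`(B γ C) α (B γ C) ⟶ (B α B) γ (C α C)` (available because `α̌ = α`), followed by
contraction of `B` and `C` side by side; cocontraction dually uses the up rule
`(B β B) γ (C β C) ⟶ (B γ C) β (B γ C)` (available because `β̂ = β`). Units are
absorbed by the equations `0 α 0 = 0` and `1 α 1 = 1`. Each level of `A` costs one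
inference and no formula is wider than `A α A`, so width `2n` and height `n` suffice.
No step is a cut: a cut needs a premiss `(X b Y) ∧ (Z b W)` with `X, Y` equal to
complementary units, while the only such premisses that occur have `X = Y`, and no
formula equals both `0` and `1`, since `=` preserves evaluation. Identities are
excluded by the same argument applied to negations. -/

theorem FEq.eval_eq {A B : Fm} (h : FEq A B) (X : ℕ → Bool) : eval X A = eval X B := by
  induction h with
  | refl => rfl
  | symm _ ih => exact ih.symm
  | trans _ _ ih₁ ih₂ => exact ih₁.trans ih₂
  | orCongr _ _ ih₁ ih₂ | andCongr _ _ ih₁ ih₂ | atomCongr _ _ _ ih₁ ih₂ =>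
    simp [eval, ih₁, ih₂]
  | _ => simp [eval]

theorem FEq.not_zero_of_one {A : Fm} (h : FEq A .one) : ¬ FEq A .zero := fun h₀ => by
  simpa [eval] using (h₀.symm.trans h).eval_eq (fun _ => false)

theorem FEq.app_zero_zero (α : Conn) : FEq (α.app .zero .zero) .zero := by
  cases α
  exacts [.orZero _, .zeroAndZero, .atomZero _]

theorem FEq.app_one_one (α : Conn) : FEq (α.app .one .one) .one := by
  cases α
  exacts [.oneOrOne, .andOne _, .atomOne _]

def Conn.dual : Conn → Conn
  | .or => .and
  | .and => .or
  | .atom a => .atom a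

theorem Fm.neg_app (γ : Conn) (X Y : Fm) : (γ.app X Y).neg = γ.dual.app X.neg Y.neg := by
  cases γ <;> rfl

theorem Conn.down_eq_self_iff {α : Conn} : α.down = α ↔ α = .or ∨ α.IsAtom := by
  cases α <;> simp [Conn.down, Conn.IsAtom]

theorem Conn.up_eq_self_iff {β : Conn} : β.up = β ↔ β = .and ∨ β.IsAtom := by
  cases β <;> simp [Conn.up, Conn.IsAtom]

theorem Conn.down_dual_eq_self {β : Conn} (h : β.up = β) : β.dual.down = β.dual := by
  cases β <;> first | rfl | cases h

theorem Fm.size_pos (A : Fm) : 0 < A.size := by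
  induction A <;> simp only [Fm.size] <;> omega

theorem Fm.size_app (γ : Conn) (X Y : Fm) : (γ.app X Y).size = X.size + Y.size := by
  cases γ <;> rfl

theorem Fm.app_induction {motive : Fm → Prop} (zero : motive .zero) (one : motive .one)
    (app : ∀ (γ : Conn) (B C : Fm), motive B → motive C → motive (γ.app B C)) (A : Fm) :
    motive A := by
  induction A with
  | zero => exact zero
  | one => exact one
  | or B C hB hC => exact app .or B C hB hC
  | and B C hB hC => exact app .and B C hB hC
  | atom b B C hB hC => exact app (.atom b) B C hB hC

theorem DTRule.down_diag {α : Conn} (hα : α.down = α) (γ : Conn) (B C : Fm) :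
    DTRule (α.app (γ.app B C) (γ.app B C)) (γ.app (α.app B B) (α.app C C)) := by
  simpa only [hα] using DTRule.down α γ B C B C

theorem DTRule.up_diag {β : Conn} (hβ : β.up = β) (γ : Conn) (B C : Fm) :
    DTRule (γ.app (β.app B B) (β.app C C)) (β.app (γ.app B C) (γ.app B C)) := by
  simpa only [hβ] using DTRule.up γ β B B C C

theorem not_isCut_zero (a : ℕ) (Q : Fm) : ¬ IsCut a .zero Q := by
  rintro ⟨_, _, _, _, ⟨⟩, -⟩

theorem not_isCut_one (a : ℕ) (Q : Fm) : ¬ IsCut a .one Q := by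
  rintro ⟨_, _, _, _, ⟨⟩, -⟩

theorem not_isCut_app {α : Conn} (hα : α.down = α) (a : ℕ) (X Y Q : Fm) :
    ¬ IsCut a (α.app X Y) Q := by
  rintro ⟨_, _, _, _, hP, -⟩
  cases α with
  | and => cases hα
  | _ => cases hP

theorem not_isCut_app_app_self (a : ℕ) (γ β : Conn) (X Z Q : Fm) :
    ¬ IsCut a (γ.app (β.app X X) Z) Q := by
  rintro ⟨_, _, _, _, hP, -, hunits⟩
  cases γ <;> cases β <;> cases hP
  rcases hunits with ⟨h₀, -, h₁, -⟩ | ⟨h₁, -, h₀, -⟩ <;>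
    exact h₁.not_zero_of_one h₀

theorem exists_contraction {α : Conn} (hα : α.down = α) (A : Fm) :
    ∃ φ : Deriv DTRule (α.app A A) A,
      φ.cutFree ∧ φ.idFree ∧ φ.width ≤ 2 * A.size ∧ φ.height ≤ A.size := by
  induction A using Fm.app_induction with
  | zero =>
    refine ⟨.vcomp (.form _) (.eq (FEq.app_zero_zero α)) (.form _),
      ⟨trivial, trivial, fun a => not_isCut_app hα a _ _ _⟩,
      ⟨trivial, trivial, fun a => not_isCut_one a _⟩, ?_, ?_⟩ <;>
    simp [Deriv.width, Deriv.height, Fm.size_app, Fm.size]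
  | one =>
    refine ⟨.vcomp (.form _) (.eq (FEq.app_one_one α)) (.form _),
      ⟨trivial, trivial, fun a => not_isCut_app hα a _ _ _⟩,
      ⟨trivial, trivial, fun a => not_isCut_zero a _⟩, ?_, ?_⟩ <;>
    simp [Deriv.width, Deriv.height, Fm.size_app, Fm.size]
  | app γ B C ihB ihC =>
    obtain ⟨φB, cutB, idB, widthB, heightB⟩ := ihB
    obtain ⟨φC, cutC, idC, widthC, heightC⟩ := ihC
    have noIdentity (a : ℕ) (P : Fm) : ¬ IsIdentity a P (γ.app (α.app B B) (α.app C C)) := by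
      unfold IsIdentity
      rw [Fm.neg_app, Fm.neg_app]
      exact not_isCut_app_app_self a _ _ _ _ _
    refine ⟨.vcomp (.form _) (DTRule.down_diag hα γ B C) (.hcomp γ φB φC),
      ⟨trivial, ⟨cutB, cutC⟩, fun a => not_isCut_app hα a _ _ _⟩,
      ⟨trivial, ⟨idB, idC⟩, fun a => noIdentity a _⟩, ?_, ?_⟩
    · simp only [Deriv.width, Fm.size_app]
      omega
    · have := B.size_pos
      have := C.size_pos
      simp only [Deriv.height, Fm.size_app]
      omega

theorem exists_cocontraction {β : Conn} (hβ : β.up = β) (A : Fm) :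
    ∃ ψ : Deriv DTRule A (β.app A A),
      ψ.cutFree ∧ ψ.idFree ∧ ψ.width ≤ 2 * A.size ∧ ψ.height ≤ A.size := by
  have noIdentity (a : ℕ) (P X Y : Fm) : ¬ IsIdentity a P (β.app X Y) := by
    unfold IsIdentity
    rw [Fm.neg_app]
    exact not_isCut_app (Conn.down_dual_eq_self hβ) a _ _ _
  induction A using Fm.app_induction with
  | zero =>
    refine ⟨.vcomp (.form _) (.eq (FEq.app_zero_zero β).symm) (.form _),
      ⟨trivial, trivial, fun a => not_isCut_zero a _⟩,
      ⟨trivial, trivial, fun a => noIdentity a _ _ _⟩, ?_, ?_⟩ <;>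
    simp [Deriv.width, Deriv.height, Fm.size_app, Fm.size]
  | one =>
    refine ⟨.vcomp (.form _) (.eq (FEq.app_one_one β).symm) (.form _),
      ⟨trivial, trivial, fun a => not_isCut_one a _⟩,
      ⟨trivial, trivial, fun a => noIdentity a _ _ _⟩, ?_, ?_⟩ <;>
    simp [Deriv.width, Deriv.height, Fm.size_app, Fm.size]
  | app γ B C ihB ihC =>
    obtain ⟨ψB, cutB, idB, widthB, heightB⟩ := ihB
    obtain ⟨ψC, cutC, idC, widthC, heightC⟩ := ihC
    refine ⟨.vcomp (.hcomp γ ψB ψC) (DTRule.up_diag hβ γ B C) (.form _),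
      ⟨⟨cutB, cutC⟩, trivial, fun a => not_isCut_app_app_self a _ _ _ _ _⟩,
      ⟨⟨idB, idC⟩, trivial, fun a => noIdentity a _ _ _⟩, ?_, ?_⟩
    · simp only [Deriv.width, Fm.size_app]
      omega
    · have := B.size_pos
      have := C.size_pos
      simp only [Deriv.height, Fm.size_app]
      omega

/-- Contraction and cocontraction: for every formula A, every
α ∈ {∨} ∪ 𝒜 and every β ∈ {∧} ∪ 𝒜 there are cut-free and identity-free
derivations from (A α A) to A and from A to (A β A), of width and height O(n)
where n is the size of A. -/
theorem dtsa_contraction :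
    ∃ c : ℕ, ∀ (A : Fm) (α β : Conn),
      (α = Conn.or ∨ α.IsAtom) → (β = Conn.and ∨ β.IsAtom) →
      ∃ (φ : Deriv DTRule (α.app A A) A) (ψ : Deriv DTRule A (β.app A A)),
        φ.cutFree ∧ φ.idFree ∧ ψ.cutFree ∧ ψ.idFree ∧
        φ.width ≤ c * A.size ∧ φ.height ≤ c * A.size ∧
        ψ.width ≤ c * A.size ∧ ψ.height ≤ c * A.size := by
  refine ⟨2, fun A α β hα hβ => ?_⟩
  obtain ⟨φ, cutφ, idφ, widthφ, heightφ⟩ :=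
    exists_contraction (Conn.down_eq_self_iff.mpr hα) A
  obtain ⟨ψ, cutψ, idψ, widthψ, heightψ⟩ :=
    exists_cocontraction (Conn.up_eq_self_iff.mpr hβ) A
  exact ⟨φ, ψ, cutφ, idφ, cutψ, idψ, widthφ, by omega, widthψ, by omega⟩

end SubatomicDT
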